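/- Let C be a k-edge-out component of a directed graph G containing s with edge size at most Δ, and suppose all k paths π₀, …, π_{k-1} (constructed by the iterated path-reversal procedure starting from G_0 = G) end at vertices of V \ C. Then in the graph G_k (obtained after reversing the edges of all k paths), there are no edges from C to V \ C, so the set of edges reachable from s in G_k has cardinality at most Δ. -/

import Mathlib

open scoped Classical

variable {V : Type*} [Fintype V] [DecidableEq V]

/-- The (directed) edges of the path `s :: l`. -/
def pathEdges (s : V) (l : List V) : List (V × V) :=
  (s :: l).zip l

/-- A (simple) path from `s` with vertex list `s :: l` in the graph with edge multiset `F`. -/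
def IsPathFrom (F : Multiset (V × V)) (s : V) (l : List V) : Prop :=
  List.Chain (fun a b => (a, b) ∈ F) s l ∧ (s :: l).Nodup

/-- The graph obtained by reversing the edges of the path `s :: l`. -/
def revAlong (F : Multiset (V × V)) (s : V) (l : List V) : Multiset (V × V) :=
  F - (pathEdges s l : Multiset (V × V)) + ((pathEdges s l).map Prod.swap : Multiset (V × V))

lemma pathEdges_cons (a b : V) (l : List V) :
    pathEdges a (b :: l) = (a, b) :: pathEdges b l := rfl

lemma mem_pathEdges_fst : ∀ (l : List V) (a : V) (e : V × V),
    e ∈ pathEdges a l → e.1 ∈ a :: l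
  | [], a, e, h => by simp [pathEdges] at h
  | b :: l, a, e, h => by
    rw [pathEdges_cons] at h
    rcases List.mem_cons.1 h with h | h
    · simp [h]
    · have := mem_pathEdges_fst l b e h
      simp only [List.mem_cons] at this ⊢
      tauto

lemma chain_mem_pathEdges (F : Multiset (V × V)) : ∀ (l : List V) (a : V),
    List.Chain (fun x y => (x, y) ∈ F) a l → ∀ e ∈ pathEdges a l, e ∈ F
  | [], a, _, e, he => by simp [pathEdges] at he
  | b :: l, a, h, e, he => by
    rw [pathEdges_cons] at he
    rw [List.Chain, List.isChain_cons_cons] at h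
    rcases List.mem_cons.1 he with rfl | he
    · exact h.1
    · exact chain_mem_pathEdges F l b h.2 e he

lemma nodup_pathEdges : ∀ (l : List V) (a : V), (a :: l).Nodup → (pathEdges a l).Nodup
  | [], a, _ => by simp [pathEdges]
  | b :: l, a, h => by
    rw [pathEdges_cons, List.nodup_cons]
    refine ⟨fun hmem => ?_, nodup_pathEdges l b (List.nodup_cons.1 h).2⟩
    have := mem_pathEdges_fst l b (a, b) hmem
    exact (List.nodup_cons.1 h).1 this

/-- Crossing-count lemma along a path. -/
lemma cross_count (C : Finset V) : ∀ (l : List V) (a : V),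
    (pathEdges a l : Multiset (V × V)).countP (fun e => e.1 ∈ C ∧ e.2 ∉ C) +
      (if (a :: l).getLast (by simp) ∈ C then 1 else 0) =
    (pathEdges a l : Multiset (V × V)).countP (fun e => e.1 ∉ C ∧ e.2 ∈ C) +
      (if a ∈ C then 1 else 0)
  | [], a => by simp [pathEdges]; congr
  | b :: l, a => by
    have ih := cross_count C l b
    have hlast : (a :: b :: l).getLast (by simp) = (b :: l).getLast (by simp) :=
      List.getLast_cons (by simp)
    rw [pathEdges_cons, hlast]
    push_cast [Multiset.countP_cons]
    by_cases ha : a ∈ C <;> by_cases hb : b ∈ C <;> simp [ha, hb] at ih ⊢ <;> omega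

/-- The effect of one path reversal on boundary and internal edge counts. -/
lemma step_count (C : Finset V) (F : Multiset (V × V)) (s : V) (l : List V)
    (h : IsPathFrom F s l) (hs : s ∈ C) (hl : (s :: l).getLast (by simp) ∉ C) :
    (revAlong F s l).countP (fun e => e.1 ∈ C ∧ e.2 ∉ C) + 1
        = F.countP (fun e => e.1 ∈ C ∧ e.2 ∉ C) ∧
      (revAlong F s l).countP (fun e => e.1 ∈ C ∧ e.2 ∈ C)
        = F.countP (fun e => e.1 ∈ C ∧ e.2 ∈ C) := by
  set p : Multiset (V × V) := (pathEdges s l : Multiset (V × V)) with hp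
  have hle : p ≤ F := by
    rw [Multiset.le_iff_subset (Multiset.coe_nodup.2 (nodup_pathEdges l s h.2))]
    intro e he
    exact chain_mem_pathEdges F l s h.1 e (by simpa using he)
  have key : ∀ (P : V × V → Prop) [DecidablePred P],
      (revAlong F s l).countP P = F.countP P - p.countP P +
        Multiset.countP P (p.map Prod.swap) := by
    intro P _
    rw [revAlong, Multiset.countP_add, Multiset.countP_sub hle, hp, Multiset.map_coe]
  have hPle : ∀ (P : V × V → Prop) [DecidablePred P], p.countP P ≤ F.countP P := by
    intro P _
    simp only [Multiset.countP_eq_card_filter]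
    exact Multiset.card_le_card (Multiset.filter_le_filter _ hle)
  have hcross := cross_count C l s
  rw [if_neg hl, if_pos hs, ← hp] at hcross
  constructor
  · rw [key]
    have hswap : Multiset.countP (fun e => e.1 ∈ C ∧ e.2 ∉ C) (p.map Prod.swap)
        = p.countP (fun e => e.1 ∉ C ∧ e.2 ∈ C) := by
      rw [Multiset.countP_map, Multiset.countP_eq_card_filter]
      apply congrArg
      apply Multiset.filter_congr
      intro x _
      simp [Prod.swap, and_comm]
    rw [hswap]
    have h1 := hPle (fun e => e.1 ∈ C ∧ e.2 ∉ C)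
    omega
  · rw [key]
    have hswap : Multiset.countP (fun e => e.1 ∈ C ∧ e.2 ∈ C) (p.map Prod.swap)
        = p.countP (fun e => e.1 ∈ C ∧ e.2 ∈ C) := by
      rw [Multiset.countP_map, Multiset.countP_eq_card_filter]
      apply congrArg
      apply Multiset.filter_congr
      intro x _
      simp [Prod.swap, and_comm]
    rw [hswap]
    have h1 := hPle (fun e => e.1 ∈ C ∧ e.2 ∈ C)
    omega

/-- if `C` is a `k`-edge-out component containing `s` of edge size at most `Δ`
and all `k` paths `π_0, …, π_{k-1}` of the iterated path-reversal procedure end outside `C`,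
then in `G_k` there are no edges from `C` to `V \ C`, and the set of edges reachable from
`s` in `G_k` has cardinality at most `Δ`. -/
theorem stmt10 (E : Multiset (V × V)) (s : V) (k Δ : ℕ) (C : Finset V) (hsC : s ∈ C)
    (hout : (E.filter (fun e => e.1 ∈ C ∧ e.2 ∉ C)).card ≤ k)
    (hsize : (E.filter (fun e => e.1 ∈ C ∧ e.2 ∈ C)).card ≤ Δ)
    (G : ℕ → Multiset (V × V)) (π : ℕ → List V)
    (hG0 : G 0 = E)
    (hpath : ∀ j < k, IsPathFrom (G j) s (π j))
    (hrev : ∀ j < k, G (j + 1) = revAlong (G j) s (π j))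
    (hlast : ∀ j < k, (s :: π j).getLast (by simp) ∉ C) :
    (G k).filter (fun e => e.1 ∈ C ∧ e.2 ∉ C) = 0 ∧
      ((G k).filter
        (fun e => Relation.ReflTransGen (fun a b => (a, b) ∈ G k) s e.1)).card ≤ Δ := by
  have hstep : ∀ j < k,
      (G (j + 1)).countP (fun e => e.1 ∈ C ∧ e.2 ∉ C) + 1
          = (G j).countP (fun e => e.1 ∈ C ∧ e.2 ∉ C) ∧
        (G (j + 1)).countP (fun e => e.1 ∈ C ∧ e.2 ∈ C)
          = (G j).countP (fun e => e.1 ∈ C ∧ e.2 ∈ C) := by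
    intro j hj
    rw [hrev j hj]
    exact step_count C (G j) s (π j) (hpath j hj) hsC (hlast j hj)
  have hmain : ∀ j ≤ k, (G j).countP (fun e => e.1 ∈ C ∧ e.2 ∉ C) + j ≤ k ∧
      (G j).countP (fun e => e.1 ∈ C ∧ e.2 ∈ C) ≤ Δ := by
    intro j hj
    induction j with
    | zero =>
      rw [hG0]
      simp only [Multiset.countP_eq_card_filter]
      exact ⟨by simpa using hout, hsize⟩
    | succ n ih =>
      have hn : n < k := hj
      have := hstep n hn
      have ihn := ih (le_of_lt hn)
      omega
  obtain ⟨hzero, hint⟩ := hmain k le_rfl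
  rw [Multiset.countP_eq_card_filter] at hint
  have hcount0 : (G k).countP (fun e => e.1 ∈ C ∧ e.2 ∉ C) = 0 := by omega
  have hfil0 : (G k).filter (fun e => e.1 ∈ C ∧ e.2 ∉ C) = 0 := by
    rw [← Multiset.card_eq_zero, ← Multiset.countP_eq_card_filter]
    exact hcount0
  have hno : ∀ e ∈ G k, ¬(e.1 ∈ C ∧ e.2 ∉ C) := Multiset.filter_eq_nil.1 hfil0
  refine ⟨hfil0, ?_⟩
  have hreach : ∀ v, Relation.ReflTransGen (fun a b => (a, b) ∈ G k) s v → v ∈ C := by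
    intro v hv
    induction hv with
    | refl => exact hsC
    | tail h' hedge ih =>
      by_contra hc
      exact hno _ hedge ⟨ih, hc⟩
  have hsub : (G k).filter
        (fun e => Relation.ReflTransGen (fun a b => (a, b) ∈ G k) s e.1)
      ≤ (G k).filter (fun e => e.1 ∈ C ∧ e.2 ∈ C) := by
    have : (G k).filter
          (fun e => Relation.ReflTransGen (fun a b => (a, b) ∈ G k) s e.1)
        = ((G k).filter (fun e => e.1 ∈ C ∧ e.2 ∈ C)).filter
          (fun e => Relation.ReflTransGen (fun a b => (a, b) ∈ G k) s e.1) := by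
      rw [Multiset.filter_filter]
      apply Multiset.filter_congr
      intro e he
      constructor
      · intro hr
        refine ⟨hr, hreach _ hr, ?_⟩
        by_contra hc
        exact hno e he ⟨hreach _ hr, hc⟩
      · exact fun h => h.1
    rw [this]
    exact Multiset.filter_le _ _
  calc ((G k).filter
        (fun e => Relation.ReflTransGen (fun a b => (a, b) ∈ G k) s e.1)).card
      ≤ ((G k).filter (fun e => e.1 ∈ C ∧ e.2 ∈ C)).card := Multiset.card_le_card hsub
    _ ≤ Δ := hint
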